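/- For every integer d ≥ 0, the d-th power of F_tot := a_0 + Σ_{y=1}^{L} a_y^+ + Σ_{x=1}^{L} a_x^− applied to Ω := u_0^{⊗(L+1)} admits the normally ordered expansion F_tot^d Ω = [d]_{q²}! · Σ_{(X,Y)} ( 1[|X|+|Y| = d] · a^−_{x_{|X|}} ⋯ a^−_{x_1} · a^+_{y_1} ⋯ a^+_{y_{|Y|}} + 1[|X|+|Y| = d−1] · a^−_{x_{|X|}} ⋯ a^−_{x_1} · a_0 · a^+_{y_1} ⋯ a^+_{y_{|Y|}} ) Ω, where the sum runs over all pairs of disjoint subsets X = {x_1 < ⋯ < x_{|X|}} and Y = {y_1 < ⋯ < y_{|Y|}} of {1,…,L}, the a^− factors appear in decreasing order of index from left to right, and the a^+ factors appear in increasing order of index from left to right. -/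

import Mathlib

open Matrix BigOperators Finset

noncomputable section

namespace Stmt6

/-- Index of the tensor basis of `W = V^{⊗(L+1)}`, where `V = ℝ³` has ordered basis
`(u₋₁, u₀, u₁)` encoded as `Fin 3` (`0 ↦ u₋₁`, `1 ↦ u₀`, `2 ↦ u₁`); tensor factors
are indexed by the sites `0,1,…,L`. -/
abbrev Conf (L : ℕ) := Fin (L + 1) → Fin 3

/-- The matrix `E`: `E u₀ = u₋₁`, `E u₋₁ = E u₁ = 0`. -/
def Emat : Matrix (Fin 3) (Fin 3) ℝ := fun a b => if a = 0 ∧ b = 1 then 1 else 0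

/-- The matrix `F`: `F u₀ = u₁`, `F u₋₁ = F u₁ = 0`. -/
def Fmat : Matrix (Fin 3) (Fin 3) ℝ := fun a b => if a = 2 ∧ b = 1 then 1 else 0

/-- `K = diag(q, q⁻¹, 1)` (entries in the order `u₋₁, u₀, u₁`). -/
def Kmat (q : ℝ) : Matrix (Fin 3) (Fin 3) ℝ := Matrix.diagonal ![q, q⁻¹, 1]

/-- `k = diag(q⁻¹, q², q⁻¹)` (entries in the order `u₋₁, u₀, u₁`). -/
def kmat (q : ℝ) : Matrix (Fin 3) (Fin 3) ℝ := Matrix.diagonal ![q⁻¹, q ^ 2, q⁻¹]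

/-- `f = E + Q·F`. -/
def fmat (Q : ℝ) : Matrix (Fin 3) (Fin 3) ℝ := Emat + Q • Fmat

/-- `a₀ = f ⊗ (K⁻¹)^{⊗L}` as a matrix in the tensor basis of `W`. -/
def a0 (L : ℕ) (q Q : ℝ) : Matrix (Conf L) (Conf L) ℝ :=
  fun b b' => ∏ s : Fin (L + 1),
    (if s = 0 then fmat Q (b s) (b' s) else (Kmat q)⁻¹ (b s) (b' s))

/-- `a_j⁺ = Id^{⊗j} ⊗ E ⊗ (K⁻¹)^{⊗(L−j)}` (the `E` factor at site `j`). -/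
def aP (L : ℕ) (q : ℝ) (j : ℕ) : Matrix (Conf L) (Conf L) ℝ :=
  fun b b' => ∏ s : Fin (L + 1),
    (if (s : ℕ) < j then (if b s = b' s then (1 : ℝ) else 0)
     else if (s : ℕ) = j then Emat (b s) (b' s)
     else (Kmat q)⁻¹ (b s) (b' s))

/-- `a_j⁻ = Q · k^{⊗j} ⊗ F ⊗ (K⁻¹)^{⊗(L−j)}` (the `F` factor at site `j`). -/
def aM (L : ℕ) (q Q : ℝ) (j : ℕ) : Matrix (Conf L) (Conf L) ℝ :=
  fun b b' => Q * ∏ s : Fin (L + 1),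
    (if (s : ℕ) < j then kmat q (b s) (b' s)
     else if (s : ℕ) = j then Fmat (b s) (b' s)
     else (Kmat q)⁻¹ (b s) (b' s))


/-- The `q²`-deformed integer `[n]_{q²} = (1 − q^{2n})/(1 − q²)`. -/
def qInt (q : ℝ) (n : ℕ) : ℝ := (1 - q ^ (2 * n)) / (1 - q ^ 2)

/-- The `q²`-deformed factorial `[d]_{q²}! = [1]_{q²} ⋯ [d]_{q²}`, with `[0]_{q²}! = 1`. -/
def qFact (q : ℝ) : ℕ → ℝ
  | 0 => 1
  | n + 1 => qFact q n * qInt q (n + 1)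

/-- `F_tot = a₀ + Σ_{y=1}^{L} a_y⁺ + Σ_{x=1}^{L} a_x⁻`. -/
def Ftot (L : ℕ) (q Q : ℝ) : Matrix (Conf L) (Conf L) ℝ :=
  a0 L q Q + ∑ y ∈ Finset.Icc 1 L, aP L q y + ∑ x ∈ Finset.Icc 1 L, aM L q Q x

/-- The vector `Ω = u₀^{⊗(L+1)}`, i.e. the tensor basis vector of the configuration
with every site equal to `u₀`. -/
def Omega (L : ℕ) : Conf L → ℝ := fun b => if b = fun _ => 1 then 1 else 0

/-- The ordered product `a⁻_{x_{|X|}} ⋯ a⁻_{x_1}` over `X = {x_1 < ⋯ < x_{|X|}}`,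
factors in decreasing order of index from left to right. -/
def prodAM (L : ℕ) (q Q : ℝ) (X : Finset ℕ) : Matrix (Conf L) (Conf L) ℝ :=
  (((X.sort (· ≤ ·)).reverse).map (aM L q Q)).prod

/-- The ordered product `a⁺_{y_1} ⋯ a⁺_{y_{|Y|}}` over `Y = {y_1 < ⋯ < y_{|Y|}}`,
factors in increasing order of index from left to right. -/
def prodAP (L : ℕ) (q : ℝ) (Y : Finset ℕ) : Matrix (Conf L) (Conf L) ℝ :=
  ((Y.sort (· ≤ ·)).map (aP L q)).prod

/-!
Index the generators by `ℤ`, with `a⁻_x` at `-x`, `a₀` at `0` and `a⁺_y` at `y`. Each of them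
squares to zero, and for indices `i < j` they satisfy `e j * e i = q² • (e i * e j)`: both are
tensor products, the sites where both factors are diagonal commute, and the one or two remaining
sites contribute `q²` in total (for `a⁺_x` and `a⁻_x` both products vanish). For such a family
`(∑ i, e i)^d = [d]_{q²}! • ∑_{|S| = d} e_S`, with `e_S` the product over `S` in increasing order:
multiplying `e_S` by `e i` on the left moves `e i` into place at the cost of `q²` per smaller
index, and summed over the positions of `i` in a set of size `d + 1` this gives `[d + 1]_{q²}`.
A set `S ⊆ [-L, L]` is a triple `(X, 0 ∈ S, Y)` with `e_S = a⁻_X (a₀) a⁺_Y`, and `e_S = 0` as soon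
as `X ∩ Y ≠ ∅`. The expansion therefore holds for the matrices themselves, before they are
applied to `Ω`.
-/

lemma sum_powerset_union {α M : Type*} [DecidableEq α] [AddCommMonoid M] {s t : Finset α}
    (h : Disjoint s t) (f : Finset α → M) :
    ∑ r ∈ (s ∪ t).powerset, f r = ∑ a ∈ s.powerset, ∑ b ∈ t.powerset, f (a ∪ b) := by
  induction t using Finset.induction_on generalizing f with
  | empty => simp
  | insert x t hxt ih =>
    obtain ⟨hxs, hst⟩ := disjoint_insert_right.mp h
    rw [union_insert, sum_powerset_insert (fun hx => (mem_union.mp hx).elim hxs hxt), ih hst,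
      ih hst, ← sum_add_distrib]
    refine sum_congr rfl fun a _ => ?_
    simp only [sum_powerset_insert hxt, union_insert]

lemma sum_powerset_map {α β M : Type*} [DecidableEq α] [DecidableEq β] [AddCommMonoid M]
    (f : α ↪ β) (s : Finset α) (g : Finset β → M) :
    ∑ r ∈ (s.map f).powerset, g r = ∑ t ∈ s.powerset, g (t.map f) := by
  induction s using Finset.induction_on generalizing g with
  | empty => simp
  | insert a s ha ih =>
    rw [map_insert, sum_powerset_insert (by simpa using ha), sum_powerset_insert ha, ih, ih]
    simp only [map_insert]

lemma sum_powersetCard_sum_sdiff {α M : Type*} [DecidableEq α] [AddCommMonoid M] (u : Finset α)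
    (n : ℕ) (g : α → Finset α → M) :
    ∑ s ∈ u.powersetCard n, ∑ i ∈ u \ s, g i (insert i s)
      = ∑ t ∈ u.powersetCard (n + 1), ∑ i ∈ t, g i t := by
  rw [sum_sigma', sum_sigma']
  refine sum_nbij' (fun p => ⟨insert p.2 p.1, p.2⟩) (fun p => ⟨p.1.erase p.2, p.2⟩)
    ?_ ?_ ?_ ?_ (fun _ _ => rfl)
  · rintro ⟨s, i⟩ h
    simp only [mem_sigma, mem_powersetCard, mem_sdiff] at h ⊢
    exact ⟨⟨insert_subset h.2.1 h.1.1, by rw [card_insert_of_notMem h.2.2, h.1.2]⟩,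
      mem_insert_self _ _⟩
  · rintro ⟨t, i⟩ h
    simp only [mem_sigma, mem_powersetCard, mem_sdiff] at h ⊢
    exact ⟨⟨(erase_subset _ _).trans h.1.1, by rw [card_erase_of_mem h.2, h.1.2]; rfl⟩,
      h.1.1 h.2, notMem_erase _ _⟩
  · rintro ⟨s, i⟩ h
    simp only [mem_sigma, mem_powersetCard, mem_sdiff] at h
    simp [erase_insert h.2.2]
  · rintro ⟨t, i⟩ h
    simp only [mem_sigma] at h
    simp [insert_erase h.2]

lemma sum_comp_card_filter_lt {ι M : Type*} [LinearOrder ι] [AddCommMonoid M] (f : ℕ → M)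
    (t : Finset ι) :
    ∑ i ∈ t, f #(t.filter (· < i)) = ∑ k ∈ range #t, f k := by
  induction t using Finset.induction_on_max with
  | empty => simp
  | insert a t ha ih =>
    have hat : a ∉ t := fun h => lt_irrefl a (ha a h)
    rw [sum_insert hat, card_insert_of_notMem hat, sum_range_succ, add_comm, filter_insert,
      if_neg (lt_irrefl a), filter_true_of_mem ha, ← ih]
    congr 1
    refine sum_congr rfl fun i hi => ?_
    rw [filter_insert, if_neg (not_lt.mpr (ha i hi).le)]

section QCommuting

variable {𝕜 A ι : Type*} [CommSemiring 𝕜] [Semiring A] [Algebra 𝕜 A] [LinearOrder ι]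

def orderedProd (e : ι → A) (s : Finset ι) : A := (s.sort.map e).prod

structure IsQCommNilpotent (c : 𝕜) (e : ι → A) (u : Finset ι) : Prop where
  mul_self : ∀ i ∈ u, e i * e i = 0
  mul_comm_of_lt : ∀ i ∈ u, ∀ j ∈ u, i < j → e j * e i = c • (e i * e j)

variable {c : 𝕜} {e : ι → A} {u : Finset ι}

@[simp]
lemma orderedProd_empty (e : ι → A) : orderedProd e ∅ = 1 := by
  simp [orderedProd]

@[simp]
lemma orderedProd_singleton (a : ι) : orderedProd e {a} = e a := by
  simp [orderedProd]

lemma orderedProd_insert_of_lt {s : Finset ι} {a : ι} (h : ∀ x ∈ s, a < x) :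
    orderedProd e (insert a s) = e a * orderedProd e s := by
  rw [orderedProd, sort_insert _ (fun x hx => (h x hx).le) (fun ha => lt_irrefl a (h a ha))]
  simp [orderedProd]

lemma orderedProd_union {s t : Finset ι} (h : ∀ a ∈ s, ∀ b ∈ t, a < b) :
    orderedProd e (s ∪ t) = orderedProd e s * orderedProd e t := by
  induction s using Finset.induction_on_min with
  | empty => simp
  | insert a s ha ih =>
    have ha' : ∀ x ∈ s ∪ t, a < x := by
      simp only [mem_union]
      rintro x (hx | hx)
      exacts [ha x hx, h a (mem_insert_self a s) x hx]
    rw [insert_union, orderedProd_insert_of_lt ha', orderedProd_insert_of_lt ha,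
      ih fun x hx => h x (mem_insert_of_mem hx), mul_assoc]

lemma orderedProd_map_of_strictMono {κ : Type*} [LinearOrder κ] (f : κ ↪ ι) (hf : StrictMono f)
    (X : Finset κ) :
    orderedProd e (X.map f) = (X.sort.map (e ∘ f)).prod := by
  rw [orderedProd, ← (hf.strictMonoOn _).map_finsetSort, List.map_map]

lemma orderedProd_map_of_strictAnti {κ : Type*} [LinearOrder κ] (f : κ ↪ ι) (hf : StrictAnti f)
    (X : Finset κ) :
    orderedProd e (X.map f) = (X.sort.reverse.map (e ∘ f)).prod := by
  have hrev : X.sort (· ≥ ·) = X.sort.reverse := by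
    rw [← (List.toFinset_sort (· ≥ ·) (List.nodup_reverse.mpr (X.sort_nodup _))).mpr
      (List.pairwise_reverse.mpr (X.pairwise_sort _)), List.toFinset_reverse, sort_toFinset]
  rw [orderedProd, ← Finset.map_sort f X (· ≥ ·) (· ≤ ·)
    fun _ _ _ _ => hf.le_iff_ge.symm, hrev, List.map_map]

namespace IsQCommNilpotent

lemma mul_orderedProd_of_mem (he : IsQCommNilpotent c e u) {i : ι} {s : Finset ι} (hs : s ⊆ u)
    (his : i ∈ s) :
    e i * orderedProd e s = 0 := by
  induction s using Finset.induction_on_min with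
  | empty => simp at his
  | insert a s ha ih =>
    have hau : a ∈ u := hs (mem_insert_self a s)
    have hsu : s ⊆ u := (subset_insert a s).trans hs
    rw [orderedProd_insert_of_lt ha, ← mul_assoc]
    rcases mem_insert.mp his with rfl | his
    · rw [he.mul_self i hau, zero_mul]
    · rw [he.mul_comm_of_lt a hau i (hsu his) (ha i his), smul_mul_assoc, mul_assoc, ih hsu his,
        mul_zero, smul_zero]

lemma mul_orderedProd_of_notMem (he : IsQCommNilpotent c e u) {i : ι} (hi : i ∈ u) {s : Finset ι}
    (hs : s ⊆ u) (his : i ∉ s) :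
    e i * orderedProd e s = c ^ #(s.filter (· < i)) • orderedProd e (insert i s) := by
  induction s using Finset.induction_on_min with
  | empty => simp
  | insert a s ha ih =>
    have hau : a ∈ u := hs (mem_insert_self a s)
    have hsu : s ⊆ u := (subset_insert a s).trans hs
    have hia : i ≠ a := fun h => his (h ▸ mem_insert_self a s)
    have his' : i ∉ s := fun h => his (mem_insert_of_mem h)
    rcases hia.lt_or_gt with hia | hai
    · have hmin : ∀ x ∈ insert a s, i < x := by
        simp only [mem_insert, forall_eq_or_imp]
        exact ⟨hia, fun x hx => hia.trans (ha x hx)⟩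
      rw [filter_false_of_mem fun x hx => not_lt.mpr (hmin x hx).le, card_empty, pow_zero,
        one_smul, orderedProd_insert_of_lt hmin]
    · have hmin : ∀ x ∈ insert i s, a < x := by
        simp only [mem_insert, forall_eq_or_imp]
        exact ⟨hai, ha⟩
      rw [orderedProd_insert_of_lt ha, ← mul_assoc, he.mul_comm_of_lt a hau i hi hai,
        smul_mul_assoc, mul_assoc, ih hsu his', mul_smul_comm, smul_smul, ← pow_succ',
        insert_comm, orderedProd_insert_of_lt hmin, filter_insert, if_pos hai,
        card_insert_of_notMem fun h => lt_irrefl a (ha a (mem_filter.mp h).1)]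

lemma sum_mul_orderedProd (he : IsQCommNilpotent c e u) {s : Finset ι} (hs : s ⊆ u) :
    (∑ i ∈ u, e i) * orderedProd e s
      = ∑ i ∈ u \ s, c ^ #((insert i s).filter (· < i)) • orderedProd e (insert i s) := by
  rw [sum_mul, ← sum_sdiff hs, sum_eq_zero fun i hi => he.mul_orderedProd_of_mem hs hi,
    add_zero]
  refine sum_congr rfl fun i hi => ?_
  obtain ⟨hiu, his⟩ := mem_sdiff.mp hi
  rw [he.mul_orderedProd_of_notMem hiu hs his, filter_insert, if_neg (lt_irrefl i)]

lemma sum_pow (he : IsQCommNilpotent c e u) (n : ℕ) :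
    (∑ i ∈ u, e i) ^ n
      = (∏ m ∈ range n, ∑ k ∈ range (m + 1), c ^ k) •
          ∑ s ∈ u.powersetCard n, orderedProd e s := by
  induction n with
  | zero => simp
  | succ n ih =>
    have step : ∀ s ∈ u.powersetCard n, (∑ i ∈ u, e i) * orderedProd e s
        = ∑ i ∈ u \ s, c ^ #((insert i s).filter (· < i)) • orderedProd e (insert i s) :=
      fun s hs => he.sum_mul_orderedProd (mem_powersetCard.mp hs).1
    rw [pow_succ', ih, mul_smul_comm, mul_sum, sum_congr rfl step,
      sum_powersetCard_sum_sdiff u n fun i t => c ^ #(t.filter (· < i)) • orderedProd e t,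
      prod_range_succ, mul_smul]
    congr 1
    rw [smul_sum]
    refine sum_congr rfl fun t ht => ?_
    rw [← sum_smul, sum_comp_card_filter_lt, (mem_powersetCard.mp ht).2]

lemma orderedProd_eq_zero (he : IsQCommNilpotent c e u) (hc : IsUnit c) {t : Finset ι}
    (ht : t ⊆ u) {i j : ι} (hi : i ∈ t) (hj : j ∈ t) (hij : i ≠ j) (h0 : e i * e j = 0) :
    orderedProd e t = 0 := by
  set s := (t.erase i).erase j
  have hsu : s ⊆ u := ((erase_subset _ _).trans (erase_subset _ _)).trans ht
  have hjs : j ∉ s := notMem_erase j _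
  have his : i ∉ insert j s := by simp [s, hij]
  have hts : insert i (insert j s) = t := by
    rw [insert_erase (mem_erase.mpr ⟨hij.symm, hj⟩), insert_erase hi]
  -- `e i * e j * orderedProd e s` is a unit multiple of `orderedProd e t`
  have key := congrArg (e i * ·) (he.mul_orderedProd_of_notMem (ht hj) hsu hjs)
  simp only [← mul_assoc, h0, zero_mul, mul_smul_comm] at key
  rw [he.mul_orderedProd_of_notMem (ht hi) (insert_subset (ht hj) hsu) his, hts,
    smul_smul] at key
  exact ((hc.pow _).mul (hc.pow _)).smul_eq_zero.mp key.symm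

end IsQCommNilpotent

end QCommuting

section PiTensor

variable {σ κ R : Type*} [Fintype σ] [CommSemiring R]

def piTensor (g : σ → Matrix κ κ R) : Matrix (σ → κ) (σ → κ) R :=
  fun b b' => ∏ s, g s (b s) (b' s)

lemma piTensor_smul (c : σ → R) (g : σ → Matrix κ κ R) :
    piTensor (fun s => c s • g s) = (∏ s, c s) • piTensor g := by
  ext b b'
  simp [piTensor, prod_mul_distrib]

variable [DecidableEq σ] [Fintype κ]

lemma piTensor_mul (g h : σ → Matrix κ κ R) : piTensor g * piTensor h = piTensor (g * h) := by
  ext b b'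
  simp only [mul_apply, piTensor, Pi.mul_apply]
  rw [prod_univ_sum, ← Fintype.piFinset_univ]
  exact sum_congr rfl fun x _ => (prod_mul_distrib).symm

lemma piTensor_mul_comm_of_two {g h : σ → Matrix κ κ R} {a b : σ} (hab : a ≠ b) {c₁ c₂ : R}
    (ha : g a * h a = c₁ • (h a * g a)) (hb : g b * h b = c₂ • (h b * g b))
    (hrest : ∀ s, s ≠ a → s ≠ b → Commute (g s) (h s)) :
    piTensor g * piTensor h = (c₁ * c₂) • (piTensor h * piTensor g) := by
  let c : σ → R := fun s => if s = a then c₁ else if s = b then c₂ else 1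
  have hc : g * h = fun s => c s • (h * g) s := by
    ext1 s
    by_cases hsa : s = a
    · subst hsa; simpa [c] using ha
    by_cases hsb : s = b
    · subst hsb; simpa [c, hsa] using hb
    simpa [c, hsa, hsb] using (hrest s hsa hsb).eq
  rw [piTensor_mul, piTensor_mul, hc, piTensor_smul, Fintype.prod_eq_mul a b hab]
  · simp [c, hab.symm]
  · rintro s ⟨hsa, hsb⟩
    simp [c, hsa, hsb]

lemma piTensor_mul_eq_zero {g h : σ → Matrix κ κ R} (a : σ) (ha : g a * h a = 0) :
    piTensor g * piTensor h = 0 := by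
  ext b b'
  rw [piTensor_mul, Matrix.zero_apply]
  exact prod_eq_zero (mem_univ a) (by simp [ha])

end PiTensor

lemma commute_of_isDiag {n R : Type*} [Fintype n] [DecidableEq n] [CommSemiring R]
    {A B : Matrix n n R} (hA : A.IsDiag) (hB : B.IsDiag) : Commute A B := by
  rw [← hA.diagonal_diag, ← hB.diagonal_diag]
  exact commute_diagonal _ _

section SiteMatrices

variable {q Q : ℝ}

lemma Kmat_inv (hq : q ≠ 0) : (Kmat q)⁻¹ = diagonal ![q⁻¹, q, 1] := by
  refine inv_eq_right_inv ?_
  rw [Kmat, diagonal_mul_diagonal, ← diagonal_one]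
  congr 1
  ext i
  fin_cases i <;> simp [hq]

lemma isDiag_Kmat_inv : ((Kmat q)⁻¹).IsDiag := by
  rw [Kmat, inv_diagonal]
  exact isDiag_diagonal _

lemma Emat_mul_diagonal (d : Fin 3 → ℝ) : Emat * diagonal d = d 1 • Emat := by
  ext a b; fin_cases a <;> fin_cases b <;> simp [Emat]

lemma diagonal_mul_Emat (d : Fin 3 → ℝ) : diagonal d * Emat = d 0 • Emat := by
  ext a b; fin_cases a <;> fin_cases b <;> simp [Emat]

lemma Fmat_mul_diagonal (d : Fin 3 → ℝ) : Fmat * diagonal d = d 1 • Fmat := by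
  ext a b; fin_cases a <;> fin_cases b <;> simp [Fmat]

lemma diagonal_mul_Fmat (d : Fin 3 → ℝ) : diagonal d * Fmat = d 2 • Fmat := by
  ext a b; fin_cases a <;> fin_cases b <;> simp [Fmat]

lemma Emat_mul_Kmat_inv (hq : q ≠ 0) : Emat * (Kmat q)⁻¹ = q ^ 2 • ((Kmat q)⁻¹ * Emat) := by
  rw [Kmat_inv hq, Emat_mul_diagonal, diagonal_mul_Emat, smul_smul]
  congr 1
  simp
  field_simp

lemma Emat_mul_kmat (hq : q ≠ 0) : Emat * kmat q = q ^ 3 • (kmat q * Emat) := by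
  rw [kmat, Emat_mul_diagonal, diagonal_mul_Emat, smul_smul]
  congr 1
  simp
  field_simp

lemma Fmat_mul_kmat (hq : q ≠ 0) : Fmat * kmat q = q ^ 3 • (kmat q * Fmat) := by
  rw [kmat, Fmat_mul_diagonal, diagonal_mul_Fmat, smul_smul]
  congr 1
  simp
  field_simp

lemma fmat_mul_kmat (hq : q ≠ 0) : fmat Q * kmat q = q ^ 3 • (kmat q * fmat Q) := by
  simp only [fmat, add_mul, mul_add, smul_mul_assoc, mul_smul_comm, Emat_mul_kmat hq,
    Fmat_mul_kmat hq, smul_add, smul_comm (q ^ 3) Q]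

lemma Kmat_inv_mul_Fmat (hq : q ≠ 0) : (Kmat q)⁻¹ * Fmat = q⁻¹ • (Fmat * (Kmat q)⁻¹) := by
  rw [Kmat_inv hq, Fmat_mul_diagonal, diagonal_mul_Fmat, smul_smul]
  simp [hq]

lemma Emat_mul_Emat : Emat * Emat = 0 := by
  ext a b; fin_cases a <;> fin_cases b <;> simp [Emat, mul_apply]

lemma Fmat_mul_Fmat : Fmat * Fmat = 0 := by
  ext a b; fin_cases a <;> fin_cases b <;> simp [Fmat, mul_apply]

lemma Emat_mul_Fmat : Emat * Fmat = 0 := by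
  ext a b; fin_cases a <;> fin_cases b <;> simp [Emat, Fmat, mul_apply]

lemma Fmat_mul_Emat : Fmat * Emat = 0 := by
  ext a b; fin_cases a <;> fin_cases b <;> simp [Emat, Fmat, mul_apply]

lemma fmat_mul_fmat : fmat Q * fmat Q = 0 := by
  simp [fmat, add_mul, mul_add, Emat_mul_Emat, Fmat_mul_Fmat, Emat_mul_Fmat, Fmat_mul_Emat]

end SiteMatrices

section Generators

variable (L : ℕ) (q Q : ℝ)

def siteP (j : ℕ) (s : Fin (L + 1)) : Matrix (Fin 3) (Fin 3) ℝ :=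
  if (s : ℕ) < j then 1 else if (s : ℕ) = j then Emat else (Kmat q)⁻¹

def siteM (j : ℕ) (s : Fin (L + 1)) : Matrix (Fin 3) (Fin 3) ℝ :=
  if (s : ℕ) < j then kmat q else if (s : ℕ) = j then Fmat else (Kmat q)⁻¹

def site0 (s : Fin (L + 1)) : Matrix (Fin 3) (Fin 3) ℝ :=
  if s = 0 then fmat Q else (Kmat q)⁻¹

variable {L q Q}

lemma aP_eq_piTensor (j : ℕ) : aP L q j = piTensor (siteP L q j) := by
  ext b b'
  refine prod_congr rfl fun s _ => ?_
  simp only [siteP]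
  split_ifs <;> simp_all [one_apply]

lemma aM_eq_smul_piTensor (j : ℕ) : aM L q Q j = Q • piTensor (siteM L q j) := by
  ext b b'
  refine congrArg (Q * ·) (prod_congr rfl fun s _ => ?_)
  simp only [siteM]
  split_ifs <;> rfl

lemma a0_eq_piTensor : a0 L q Q = piTensor (site0 L q Q) := by
  ext b b'
  refine prod_congr rfl fun s _ => ?_
  simp only [site0]
  split_ifs <;> rfl

lemma isDiag_siteP {j : ℕ} {s : Fin (L + 1)} (hs : (s : ℕ) ≠ j) : (siteP L q j s).IsDiag := by
  simp only [siteP, hs, if_false]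
  split_ifs
  exacts [isDiag_one, isDiag_Kmat_inv]

lemma isDiag_siteM {j : ℕ} {s : Fin (L + 1)} (hs : (s : ℕ) ≠ j) : (siteM L q j s).IsDiag := by
  simp only [siteM, hs, if_false]
  split_ifs
  exacts [isDiag_diagonal _, isDiag_Kmat_inv]

lemma isDiag_site0 {s : Fin (L + 1)} (hs : s ≠ 0) : (site0 L q Q s).IsDiag := by
  simp only [site0, hs, if_false]
  exact isDiag_Kmat_inv

lemma aP_mul_aP_of_lt (hq : q ≠ 0) {i j : ℕ} (hij : i < j) (hj : j ≤ L) :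
    aP L q j * aP L q i = q ^ 2 • (aP L q i * aP L q j) := by
  have h := piTensor_mul_comm_of_two (g := siteP L q j) (h := siteP L q i)
    (a := ⟨j, by omega⟩) (b := ⟨i, by omega⟩) (c₁ := q ^ 2) (c₂ := 1) (by simp; omega)
    (by simpa [siteP, hij.ne', not_lt.mpr hij.le] using Emat_mul_Kmat_inv hq)
    (by simp [siteP, hij])
    fun s hsj hsi => commute_of_isDiag (isDiag_siteP (Fin.val_ne_of_ne hsj))
      (isDiag_siteP (Fin.val_ne_of_ne hsi))
  simpa [aP_eq_piTensor] using h

lemma aM_mul_aM_of_lt (hq : q ≠ 0) {i j : ℕ} (hij : i < j) (hj : j ≤ L) :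
    aM L q Q i * aM L q Q j = q ^ 2 • (aM L q Q j * aM L q Q i) := by
  have h := piTensor_mul_comm_of_two (g := siteM L q i) (h := siteM L q j)
    (a := ⟨i, by omega⟩) (b := ⟨j, by omega⟩) (c₁ := q ^ 3) (c₂ := q⁻¹) (by simp; omega)
    (by simpa [siteM, hij] using Fmat_mul_kmat hq)
    (by simpa [siteM, hij.ne', not_lt.mpr hij.le] using Kmat_inv_mul_Fmat hq)
    fun s hsi hsj => commute_of_isDiag (isDiag_siteM (Fin.val_ne_of_ne hsi))
      (isDiag_siteM (Fin.val_ne_of_ne hsj))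
  rw [aM_eq_smul_piTensor, aM_eq_smul_piTensor, smul_mul_smul_comm, smul_mul_smul_comm, h,
    smul_smul, smul_smul]
  congr 1
  field_simp

lemma aP_mul_aM (hq : q ≠ 0) {x y : ℕ} (hx : x ≤ L) (hy : y ≤ L) :
    aP L q y * aM L q Q x = q ^ 2 • (aM L q Q x * aP L q y) := by
  simp only [aM_eq_smul_piTensor, aP_eq_piTensor, mul_smul_comm, smul_mul_assoc]
  rw [smul_comm]
  congr 1
  rcases lt_trichotomy x y with hxy | rfl | hyx
  · have h := piTensor_mul_comm_of_two (g := siteP L q y) (h := siteM L q x)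
      (a := ⟨y, by omega⟩) (b := ⟨x, by omega⟩) (c₁ := q ^ 2) (c₂ := 1) (by simp; omega)
      (by simpa [siteP, siteM, hxy, hxy.ne', not_lt.mpr hxy.le] using Emat_mul_Kmat_inv hq)
      (by simp [siteP, siteM, hxy])
      fun s hsy hsx => commute_of_isDiag (isDiag_siteP (Fin.val_ne_of_ne hsy))
        (isDiag_siteM (Fin.val_ne_of_ne hsx))
    rwa [mul_one] at h
  · rw [piTensor_mul_eq_zero ⟨x, by omega⟩ (by simpa [siteP, siteM] using Emat_mul_Fmat),
      piTensor_mul_eq_zero ⟨x, by omega⟩ (by simpa [siteP, siteM] using Fmat_mul_Emat),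
      smul_zero]
  · have h := piTensor_mul_comm_of_two (g := siteP L q y) (h := siteM L q x)
      (a := ⟨y, by omega⟩) (b := ⟨x, by omega⟩) (c₁ := q ^ 3) (c₂ := q⁻¹) (by simp; omega)
      (by simpa [siteP, siteM, hyx] using Emat_mul_kmat hq)
      (by simpa [siteP, siteM, hyx.ne', not_lt.mpr hyx.le] using Kmat_inv_mul_Fmat hq)
      fun s hsy hsx => commute_of_isDiag (isDiag_siteP (Fin.val_ne_of_ne hsy))
        (isDiag_siteM (Fin.val_ne_of_ne hsx))
    rw [h]
    congr 1
    field_simp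

lemma aP_mul_a0 (hq : q ≠ 0) {y : ℕ} (hy : 0 < y) (hyL : y ≤ L) :
    aP L q y * a0 L q Q = q ^ 2 • (a0 L q Q * aP L q y) := by
  have h := piTensor_mul_comm_of_two (g := siteP L q y) (h := site0 L q Q)
    (a := ⟨y, by omega⟩) (b := 0) (c₁ := q ^ 2) (c₂ := 1) (by simp [Fin.ext_iff]; omega)
    (by simpa [siteP, site0, Fin.ext_iff, hy.ne'] using Emat_mul_Kmat_inv hq)
    (by simp [siteP, site0, hy])
    fun s hsy hs0 => commute_of_isDiag (isDiag_siteP (Fin.val_ne_of_ne hsy)) (isDiag_site0 hs0)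
  rw [aP_eq_piTensor, a0_eq_piTensor, h, mul_one]

lemma a0_mul_aM (hq : q ≠ 0) {x : ℕ} (hx : 0 < x) (hxL : x ≤ L) :
    a0 L q Q * aM L q Q x = q ^ 2 • (aM L q Q x * a0 L q Q) := by
  have h := piTensor_mul_comm_of_two (g := site0 L q Q) (h := siteM L q x)
    (a := 0) (b := ⟨x, by omega⟩) (c₁ := q ^ 3) (c₂ := q⁻¹) (by simp [Fin.ext_iff]; omega)
    (by simpa [siteM, site0, hx] using fmat_mul_kmat (Q := Q) hq)
    (by simpa [siteM, site0, Fin.ext_iff, hx.ne'] using Kmat_inv_mul_Fmat hq)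
    fun s hs0 hsx => commute_of_isDiag (isDiag_site0 hs0) (isDiag_siteM (Fin.val_ne_of_ne hsx))
  rw [aM_eq_smul_piTensor, a0_eq_piTensor, mul_smul_comm, smul_mul_assoc, h, smul_comm]
  congr 1
  field_simp

lemma aP_mul_self {y : ℕ} (hy : y ≤ L) : aP L q y * aP L q y = 0 := by
  rw [aP_eq_piTensor, piTensor_mul_eq_zero ⟨y, by omega⟩ (by simpa [siteP] using Emat_mul_Emat)]

lemma aM_mul_self {x : ℕ} (hx : x ≤ L) : aM L q Q x * aM L q Q x = 0 := by
  rw [aM_eq_smul_piTensor, smul_mul_smul_comm,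
    piTensor_mul_eq_zero ⟨x, by omega⟩ (by simpa [siteM] using Fmat_mul_Fmat), smul_zero]

lemma a0_mul_self : a0 L q Q * a0 L q Q = 0 := by
  rw [a0_eq_piTensor, piTensor_mul_eq_zero 0 (by simpa [site0] using fmat_mul_fmat)]

lemma aM_mul_aP_self {x : ℕ} (hx : x ≤ L) : aM L q Q x * aP L q x = 0 := by
  rw [aM_eq_smul_piTensor, aP_eq_piTensor, smul_mul_assoc,
    piTensor_mul_eq_zero ⟨x, by omega⟩ (by simpa [siteP, siteM] using Fmat_mul_Emat), smul_zero]

end Generators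

section IntegerIndexing

variable (L : ℕ) (q Q : ℝ)

def aZ (n : ℤ) : Matrix (Conf L) (Conf L) ℝ :=
  if n < 0 then aM L q Q n.natAbs else if n = 0 then a0 L q Q else aP L q n.natAbs

def negCast : ℕ ↪ ℤ := ⟨fun n => -(n : ℤ), fun a b h => by simpa using h⟩

variable {L q Q}

@[simp]
lemma negCast_apply (n : ℕ) : negCast n = -(n : ℤ) := rfl

lemma strictAnti_negCast : StrictAnti negCast := fun a b h => by simpa using h

lemma aZ_neg {x : ℕ} (hx : 0 < x) : aZ L q Q (-x) = aM L q Q x := by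
  simp [aZ, hx]

lemma aZ_zero : aZ L q Q 0 = a0 L q Q := by
  simp [aZ]

lemma aZ_natCast {y : ℕ} (hy : 0 < y) : aZ L q Q y = aP L q y := by
  simp [aZ, hy.ne']

lemma Icc_neg_eq_insert :
    Icc (-L : ℤ) L = insert 0 ((Icc 1 L).map negCast ∪ (Icc 1 L).map Nat.castEmbedding) := by
  ext n
  simp only [mem_Icc, mem_insert, mem_union, mem_map, negCast_apply, Nat.castEmbedding_apply]
  constructor
  · intro h
    rcases lt_trichotomy n 0 with hn | hn | hn
    · exact Or.inr (Or.inl ⟨n.natAbs, by omega, by omega⟩)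
    · exact Or.inl hn
    · exact Or.inr (Or.inr ⟨n.natAbs, by omega, by omega⟩)
  · rintro (rfl | ⟨x, hx, rfl⟩ | ⟨y, hy, rfl⟩) <;> omega

lemma forall_mem_Icc_neg {P : ℤ → Prop} :
    (∀ n ∈ Icc (-L : ℤ) L, P n) ↔
      P 0 ∧ (∀ x : ℕ, 0 < x → x ≤ L → P (-x)) ∧ ∀ y : ℕ, 0 < y → y ≤ L → P y := by
  simp only [Icc_neg_eq_insert, forall_mem_insert, forall_mem_union, forall_mem_map, mem_Icc,
    negCast_apply, Nat.castEmbedding_apply, Nat.one_le_iff_ne_zero, Nat.pos_iff_ne_zero, and_imp]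

lemma isQCommNilpotent_aZ (hq : q ≠ 0) :
    IsQCommNilpotent (q ^ 2) (aZ L q Q) (Icc (-L : ℤ) L) where
  mul_self := forall_mem_Icc_neg.mpr ⟨by rw [aZ_zero, a0_mul_self],
    fun x hx hxL => by rw [aZ_neg hx, aM_mul_self hxL],
    fun y hy hyL => by rw [aZ_natCast hy, aP_mul_self hyL]⟩
  mul_comm_of_lt := by
    refine forall_mem_Icc_neg.mpr
      ⟨forall_mem_Icc_neg.mpr ⟨?_, fun x hx hxL => ?_, fun y hy hyL => ?_⟩,
        fun x hx hxL => forall_mem_Icc_neg.mpr ⟨?_, fun x' hx' hxL' => ?_, fun y hy hyL => ?_⟩,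
        fun y hy hyL => forall_mem_Icc_neg.mpr ⟨?_, fun x hx hxL => ?_, fun y' hy' hyL' => ?_⟩⟩ <;>
      intro hij <;> try omega
    · rw [aZ_zero, aZ_natCast hy, aP_mul_a0 hq hy hyL]
    · rw [aZ_zero, aZ_neg hx, a0_mul_aM hq hx hxL]
    · rw [aZ_neg hx, aZ_neg hx', aM_mul_aM_of_lt hq (by simpa using hij) hxL]
    · rw [aZ_neg hx, aZ_natCast hy, aP_mul_aM hq hxL hyL]
    · rw [aZ_natCast hy, aZ_natCast hy', aP_mul_aP_of_lt hq (by simpa using hij) hyL']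

lemma map_negCast_lt_zero {X : Finset ℕ} (hX : X ⊆ Icc 1 L) : ∀ a ∈ X.map negCast, a < 0 := by
  simp only [forall_mem_map, negCast_apply, Left.neg_neg_iff, Nat.cast_pos]
  exact fun x hx => (mem_Icc.mp (hX hx)).1

lemma zero_lt_map_natCast {Y : Finset ℕ} (hY : Y ⊆ Icc 1 L) :
    ∀ b ∈ Y.map Nat.castEmbedding, (0 : ℤ) < b := by
  simp only [forall_mem_map, Nat.castEmbedding_apply, Nat.cast_pos]
  exact fun y hy => (mem_Icc.mp (hY hy)).1

lemma map_negCast_lt_map_natCast {X Y : Finset ℕ} (hX : X ⊆ Icc 1 L) (hY : Y ⊆ Icc 1 L) :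
    ∀ a ∈ X.map negCast, ∀ b ∈ Y.map Nat.castEmbedding, a < b :=
  fun a ha b hb => (map_negCast_lt_zero hX a ha).trans (zero_lt_map_natCast hY b hb)

lemma disjoint_map_negCast_map_natCast {X Y : Finset ℕ} (hX : X ⊆ Icc 1 L)
    (hY : Y ⊆ Icc 1 L) : Disjoint (X.map negCast) (Y.map Nat.castEmbedding) :=
  disjoint_left.mpr fun a ha hb => lt_irrefl a (map_negCast_lt_map_natCast hX hY a ha a hb)

lemma zero_notMem_map_negCast_union {X Y : Finset ℕ} (hX : X ⊆ Icc 1 L) (hY : Y ⊆ Icc 1 L) :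
    (0 : ℤ) ∉ X.map negCast ∪ Y.map Nat.castEmbedding := fun h =>
  (mem_union.mp h).elim (fun h => lt_irrefl _ (map_negCast_lt_zero hX 0 h))
    fun h => lt_irrefl _ (zero_lt_map_natCast hY 0 h)

lemma map_negCast_union_subset {X Y : Finset ℕ} (hX : X ⊆ Icc 1 L) (hY : Y ⊆ Icc 1 L) :
    X.map negCast ∪ Y.map Nat.castEmbedding ⊆ Icc (-L : ℤ) L := by
  rw [Icc_neg_eq_insert]
  exact (union_subset_union (map_subset_map.mpr hX) (map_subset_map.mpr hY)).trans
    (subset_insert _ _)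

lemma Ftot_eq_sum_aZ : Ftot L q Q = ∑ n ∈ Icc (-L : ℤ) L, aZ L q Q n := by
  rw [Icc_neg_eq_insert, sum_insert (zero_notMem_map_negCast_union subset_rfl subset_rfl),
    sum_union (disjoint_map_negCast_map_natCast subset_rfl subset_rfl), sum_map, sum_map, aZ_zero,
    Ftot, add_assoc, add_comm (∑ y ∈ Icc 1 L, aP L q y)]
  congr 2 <;> refine sum_congr rfl fun x hx => ?_
  · rw [negCast_apply, aZ_neg (mem_Icc.mp hx).1]
  · rw [Nat.castEmbedding_apply, aZ_natCast (mem_Icc.mp hx).1]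

lemma orderedProd_aZ_map_negCast {X : Finset ℕ} (hX : X ⊆ Icc 1 L) :
    orderedProd (aZ L q Q) (X.map negCast) = prodAM L q Q X := by
  rw [orderedProd_map_of_strictAnti negCast strictAnti_negCast, prodAM]
  congr 1
  refine List.map_congr_left fun x hx => ?_
  rw [Function.comp_apply, negCast_apply,
    aZ_neg (mem_Icc.mp (hX ((mem_sort _).mp (List.mem_reverse.mp hx)))).1]

lemma orderedProd_aZ_map_natCast {Y : Finset ℕ} (hY : Y ⊆ Icc 1 L) :
    orderedProd (aZ L q Q) (Y.map Nat.castEmbedding) = prodAP L q Y := by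
  rw [orderedProd_map_of_strictMono Nat.castEmbedding Nat.strictMono_cast, prodAP]
  congr 1
  refine List.map_congr_left fun y hy => ?_
  rw [Function.comp_apply, Nat.castEmbedding_apply,
    aZ_natCast (mem_Icc.mp (hY ((mem_sort _).mp hy))).1]

lemma orderedProd_aZ_union {X Y : Finset ℕ} (hX : X ⊆ Icc 1 L) (hY : Y ⊆ Icc 1 L) :
    orderedProd (aZ L q Q) (X.map negCast ∪ Y.map Nat.castEmbedding)
      = prodAM L q Q X * prodAP L q Y := by
  rw [orderedProd_union (map_negCast_lt_map_natCast hX hY), orderedProd_aZ_map_negCast hX,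
    orderedProd_aZ_map_natCast hY]

lemma orderedProd_aZ_insert_zero_union {X Y : Finset ℕ} (hX : X ⊆ Icc 1 L)
    (hY : Y ⊆ Icc 1 L) :
    orderedProd (aZ L q Q) (insert 0 (X.map negCast ∪ Y.map Nat.castEmbedding))
      = prodAM L q Q X * a0 L q Q * prodAP L q Y := by
  have hsep : ∀ a ∈ X.map negCast, ∀ b ∈ insert 0 (Y.map Nat.castEmbedding), a < b := by
    simp only [forall_mem_insert]
    exact fun a ha => ⟨map_negCast_lt_zero hX a ha, map_negCast_lt_map_natCast hX hY a ha⟩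
  rw [← union_insert, orderedProd_union hsep, orderedProd_insert_of_lt (zero_lt_map_natCast hY),
    orderedProd_aZ_map_negCast hX, orderedProd_aZ_map_natCast hY, aZ_zero, mul_assoc]

lemma orderedProd_aZ_eq_zero (hq : q ≠ 0) {X Y : Finset ℕ} (hX : X ⊆ Icc 1 L)
    (hXY : ¬Disjoint X Y) {s : Finset ℤ} (hs : X.map negCast ∪ Y.map Nat.castEmbedding ⊆ s)
    (hsu : s ⊆ Icc (-L : ℤ) L) :
    orderedProd (aZ L q Q) s = 0 := by
  obtain ⟨x, hxX, hxY⟩ := not_disjoint_iff.mp hXY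
  obtain ⟨hx, hxL⟩ := mem_Icc.mp (hX hxX)
  refine (isQCommNilpotent_aZ hq).orderedProd_eq_zero (hq.isUnit.pow 2) hsu
    (i := -x) (j := x) (hs (mem_union_left _ (mem_map_of_mem negCast hxX)))
    (hs (mem_union_right _ (mem_map_of_mem Nat.castEmbedding hxY))) (by omega) ?_
  rw [aZ_neg hx, aZ_natCast hx, aM_mul_aP_self hxL]

end IntegerIndexing

section NormalOrder

variable (L : ℕ) (q Q : ℝ)

def normalOrderedSum (d : ℕ) : Matrix (Conf L) (Conf L) ℝ :=
  ∑ X ∈ (Icc 1 L).powerset, ∑ Y ∈ (Icc 1 L).powerset,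
    if Disjoint X Y then
      (if X.card + Y.card = d then (1 : ℝ) else 0) • (prodAM L q Q X * prodAP L q Y) +
        (if X.card + Y.card + 1 = d then (1 : ℝ) else 0) •
          (prodAM L q Q X * a0 L q Q * prodAP L q Y)
    else 0

variable {L q Q}

lemma sum_powersetCard_orderedProd_aZ (hq : q ≠ 0) (d : ℕ) :
    ∑ s ∈ (Icc (-L : ℤ) L).powersetCard d, orderedProd (aZ L q Q) s
      = normalOrderedSum L q Q d := by
  rw [normalOrderedSum, powersetCard_eq_filter, sum_filter, Icc_neg_eq_insert,
    sum_powerset_insert (zero_notMem_map_negCast_union subset_rfl subset_rfl),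
    ← sum_add_distrib, sum_powerset_union (disjoint_map_negCast_map_natCast subset_rfl subset_rfl),
    sum_powerset_map]
  refine sum_congr rfl fun X hX => ?_
  rw [sum_powerset_map]
  refine sum_congr rfl fun Y hY => ?_
  rw [mem_powerset] at hX hY
  have hsub := map_negCast_union_subset hX hY
  rw [card_insert_of_notMem (zero_notMem_map_negCast_union hX hY),
    card_union_of_disjoint (disjoint_map_negCast_map_natCast hX hY), card_map, card_map]
  by_cases hXY : Disjoint X Y
  · rw [if_pos hXY, orderedProd_aZ_union hX hY, orderedProd_aZ_insert_zero_union hX hY]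
    simp only [ite_smul, one_smul, zero_smul]
  · rw [if_neg hXY, orderedProd_aZ_eq_zero hq hX hXY subset_rfl hsub,
      orderedProd_aZ_eq_zero hq hX hXY (subset_insert _ _) (insert_subset (by simp) hsub)]
    simp

end NormalOrder

lemma qInt_eq_geom_sum {q : ℝ} (hq : q ^ 2 ≠ 1) (n : ℕ) :
    qInt q n = ∑ k ∈ range n, (q ^ 2) ^ k := by
  rw [geom_sum_eq hq, qInt, pow_mul, ← neg_div_neg_eq, neg_sub, neg_sub]

lemma qFact_eq_prod {q : ℝ} (hq : q ^ 2 ≠ 1) (n : ℕ) :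
    qFact q n = ∏ m ∈ range n, ∑ k ∈ range (m + 1), (q ^ 2) ^ k := by
  induction n with
  | zero => rfl
  | succ n ih => rw [qFact, ih, prod_range_succ, qInt_eq_geom_sum hq]

lemma Ftot_pow_eq (L : ℕ) (q Q : ℝ) (hq : q ≠ 0) (hq2 : q ^ 2 ≠ 1) (d : ℕ) :
    Ftot L q Q ^ d = qFact q d • normalOrderedSum L q Q d := by
  rw [Ftot_eq_sum_aZ, (isQCommNilpotent_aZ hq).sum_pow, qFact_eq_prod hq2,
    sum_powersetCard_orderedProd_aZ hq]

theorem Ftot_pow_expansion_general (L : ℕ)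
    (q Q : ℝ) (hq0 : 0 < q) (hq1 : q < 1) (d : ℕ) :
    (Ftot L q Q) ^ d *ᵥ Omega L =
      qFact q d •
        ∑ X ∈ (Finset.Icc 1 L).powerset, ∑ Y ∈ (Finset.Icc 1 L).powerset,
          (if Disjoint X Y then
            (if X.card + Y.card = d then (1 : ℝ) else 0) •
                ((prodAM L q Q X * prodAP L q Y) *ᵥ Omega L) +
              (if X.card + Y.card + 1 = d then (1 : ℝ) else 0) •
                ((prodAM L q Q X * a0 L q Q * prodAP L q Y) *ᵥ Omega L)
          else 0) := by
  have hq2 : q ^ 2 ≠ 1 := (pow_lt_one₀ hq0.le hq1 two_ne_zero).ne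
  rw [Ftot_pow_eq L q Q hq0.ne' hq2, smul_mulVec, normalOrderedSum, sum_mulVec]
  refine congrArg _ (sum_congr rfl fun X _ => ?_)
  rw [sum_mulVec]
  refine sum_congr rfl fun Y _ => ?_
  split_ifs <;> simp only [add_mulVec, smul_mulVec, zero_mulVec]

/-- **Normally ordered expansion of `F_tot^d Ω`** (the second Lemma in the proof of
Theorem 1.3): for every `d ≥ 0`,
`F_tot^d Ω = [d]_{q²}! Σ_{(X,Y) disjoint ⊆ {1,…,L}} ( 1[|X|+|Y|=d] a⁻_X a⁺_Y
 + 1[|X|+|Y|=d−1] a⁻_X a₀ a⁺_Y ) Ω`,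
the `a⁻` factors in decreasing order and the `a⁺` factors in increasing order. -/
theorem Ftot_pow_expansion (L : ℕ) (hL : 1 ≤ L)
    (q Q : ℝ) (hq0 : 0 < q) (hq1 : q < 1) (hQ0 : 0 < Q) (hQ1 : Q < 1) (d : ℕ) :
    (Ftot L q Q) ^ d *ᵥ Omega L =
      qFact q d •
        ∑ X ∈ (Finset.Icc 1 L).powerset, ∑ Y ∈ (Finset.Icc 1 L).powerset,
          (if Disjoint X Y then
            (if X.card + Y.card = d then (1 : ℝ) else 0) •
                ((prodAM L q Q X * prodAP L q Y) *ᵥ Omega L) +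
              (if X.card + Y.card + 1 = d then (1 : ℝ) else 0) •
                ((prodAM L q Q X * a0 L q Q * prodAP L q Y) *ᵥ Omega L)
          else 0) :=
  Ftot_pow_expansion_general L q Q hq0 hq1 d

end Stmt6

end
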